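/- arXiv:math/9902132 — 4 statements merged into one kernel-verified Lean document; each statement's English description precedes it below -/
import Mathlib

section
/- (Lemma 1) Let R be a local ring and S a commutative R-algebra with structure map i : R → S, equipped with an R-algebra homomorphism ε : S → R satisfying ε ∘ i = id_R. Assume there is t ∈ S such that S is a finite module over the R-subalgebra R[t] ⊆ S generated by t, and let f ∈ S be such that S/(f) is a finite R-module. Put I = ker ε, J = (f) ∩ I, and J' = (J ∩ R[t])S, the ideal of S generated by J ∩ R[t]. Then both S/J and S/J' are finite R-modules. -/
open Polynomial

set_option maxHeartbeats 1000000 in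
set_option synthInstance.maxHeartbeats 200000 in
/-- If `I ≤ K` and `S⧸I` is a finite `R`-module, so is `S⧸K`. -/
lemma quot_mono_finite {R S : Type} [CommRing R] [CommRing S] [Algebra R S]
    {I K : Ideal S} (h : I ≤ K) (hI : Module.Finite R (S ⧸ I)) :
    Module.Finite R (S ⧸ K) := by
  have hfact : ∀ a : S, a ∈ I → (Ideal.Quotient.mkₐ R K) a = 0 := fun a ha =>
    Ideal.Quotient.eq_zero_iff_mem.mpr (h ha)
  refine Module.Finite.of_surjective
    (Ideal.Quotient.liftₐ I (Ideal.Quotient.mkₐ R K) hfact).toLinearMap ?_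
  intro x
  obtain ⟨y, rfl⟩ := Ideal.Quotient.mk_surjective x
  exact ⟨Ideal.Quotient.mk I y, rfl⟩

set_option maxHeartbeats 1000000 in
set_option synthInstance.maxHeartbeats 200000 in
/-- If `S` is finite over `R[t]` and `q` is monic, then `S ⧸ (q(t))` is a finite `R`-module. -/
lemma quot_aeval_finite {R S : Type} [CommRing R] [CommRing S] [Algebra R S]
    (t : S) (hS : Module.Finite (Algebra.adjoin R {t}) S)
    {q : Polynomial R} (hq : q.Monic) :
    Module.Finite R (S ⧸ Ideal.span {Polynomial.aeval t q}) := by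
  classical
  set A := Algebra.adjoin R ({t} : Set S) with hA
  set I : Ideal S := Ideal.span {Polynomial.aeval t q} with hI
  set t' : S ⧸ I := Ideal.Quotient.mk I t with ht'def
  have ht' : IsIntegral R t' := by
    refine ⟨q, hq, ?_⟩
    have h1 : Polynomial.aeval t' q = Ideal.Quotient.mk I (Polynomial.aeval t q) :=
      Polynomial.aeval_algHom_apply (Ideal.Quotient.mkₐ R I) t q
    show Polynomial.aeval t' q = 0
    rw [h1, Ideal.Quotient.eq_zero_iff_mem]
    exact Ideal.subset_span rfl
  set B := Algebra.adjoin R ({t'} : Set (S ⧸ I)) with hB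
  have hBfin : Module.Finite R B := Module.Finite.iff_fg.mpr ht'.fg_adjoin_singleton
  have key : ∀ x ∈ A, Ideal.Quotient.mk I x ∈ B := by
    intro x hx
    have hmem : Ideal.Quotient.mkₐ R I x ∈ A.map (Ideal.Quotient.mkₐ R I) :=
      ⟨x, hx, rfl⟩
    rw [hA, AlgHom.map_adjoin, Set.image_singleton] at hmem
    simpa using hmem
  obtain ⟨⟨s, hs⟩⟩ := hS
  have hQB : Module.Finite B (S ⧸ I) := by
    refine ⟨⟨s.image (Ideal.Quotient.mk I), ?_⟩⟩
    rw [eq_top_iff]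
    rintro x -
    obtain ⟨y, rfl⟩ := Ideal.Quotient.mk_surjective x
    have hy : y ∈ Submodule.span A (s : Set S) := hs ▸ Submodule.mem_top
    refine Submodule.span_induction (p := fun y _ =>
        Ideal.Quotient.mk I y ∈ Submodule.span B
          ((s.image (Ideal.Quotient.mk I) : Finset (S ⧸ I)) : Set (S ⧸ I)))
      ?_ ?_ ?_ ?_ hy
    · intro z hz
      exact Submodule.subset_span (Finset.mem_coe.mpr (Finset.mem_image_of_mem _ hz))
    · simp
    · intro a b _ _ ha hb
      rw [map_add]; exact Submodule.add_mem _ ha hb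
    · intro a z _ ih
      have h1 : (a • z : S) = (a : S) * z := rfl
      rw [h1, map_mul]
      have hb : Ideal.Quotient.mk I (a : S) ∈ B := key _ a.2
      have h2 : Ideal.Quotient.mk I (a : S) * Ideal.Quotient.mk I z
          = (⟨Ideal.Quotient.mk I (a : S), hb⟩ : B) • Ideal.Quotient.mk I z := rfl
      rw [h2]
      exact Submodule.smul_mem _ _ ih
  exact Module.Finite.trans B (S ⧸ I)

set_option maxHeartbeats 1000000 in
set_option synthInstance.maxHeartbeats 200000 in
/-- **Lemma 1.**  Let `R` be a local ring, `S` an `R`-algebra with an augmentation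
`ε : S → R` (so `ε ∘ i = id`), `t ∈ S` such that `S` is finite over the subalgebra `R[t]`,
and `f ∈ S` such that `S/(f)` is a finite `R`-module.  With `I = ker ε`, `J = (f) ⊓ I` and
`J' = (J ∩ R[t])S`, both `S/J` and `S/J'` are finite `R`-modules. -/
theorem lemma_one
    (R : Type) [CommRing R] [IsLocalRing R]
    (S : Type) [CommRing S] [Algebra R S]
    (ε : S →ₐ[R] R)
    (t : S) (hS : Module.Finite (Algebra.adjoin R {t}) S)
    (f : S) (hf : Module.Finite R (S ⧸ Ideal.span {f})) :
    Module.Finite R (S ⧸ (Ideal.span {f} ⊓ RingHom.ker (ε : S →+* R))) ∧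
    Module.Finite R (S ⧸ Ideal.span
      ((((Ideal.span {f} ⊓ RingHom.ker (ε : S →+* R)) : Ideal S) : Set S) ∩
        (Algebra.adjoin R {t} : Set S))) := by
  classical
  set J : Ideal S := Ideal.span {f} ⊓ RingHom.ker (ε : S →+* R) with hJ
  set J' : Ideal S := Ideal.span ((J : Set S) ∩ (Algebra.adjoin R {t} : Set S)) with hJ'
  -- t is integral mod (f)
  obtain ⟨p₀, hp₀m, hp₀⟩ := IsIntegral.of_finite R (Ideal.Quotient.mk (Ideal.span {f}) t)
  have hp₀' : Polynomial.aeval (Ideal.Quotient.mk (Ideal.span {f}) t) p₀ = 0 := hp₀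
  set p : Polynomial R := X * p₀ with hp
  have hpm : p.Monic := (monic_X).mul hp₀m
  have hpdeg : 1 ≤ p.natDegree := by
    rw [hp, Polynomial.Monic.natDegree_mul monic_X hp₀m, natDegree_X]
    omega
  set g : S := Polynomial.aeval t p with hg
  have hgf : g ∈ Ideal.span {f} := by
    have h1 : Polynomial.aeval (Ideal.Quotient.mk (Ideal.span {f}) t) p
        = Ideal.Quotient.mk (Ideal.span {f}) g :=
      Polynomial.aeval_algHom_apply (Ideal.Quotient.mkₐ R _) t p
    have h2 : Polynomial.aeval (Ideal.Quotient.mk (Ideal.span {f}) t) p = 0 := by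
      rw [hp, map_mul, hp₀', mul_zero]
    rw [h2] at h1
    exact Ideal.Quotient.eq_zero_iff_mem.mp h1.symm
  set a : R := ε g with ha
  set q : Polynomial R := p ^ 2 - C a * p with hq
  have hqm : q.Monic := by
    refine (hpm.pow 2).sub_of_left ?_
    have hd1 : (C a * p).degree ≤ p.degree := by
      refine le_trans (degree_mul_le _ _) ?_
      calc (C a).degree + p.degree ≤ 0 + p.degree := add_le_add degree_C_le le_rfl
      _ = p.degree := zero_add _
    refine lt_of_le_of_lt hd1 ?_
    rw [Polynomial.degree_eq_natDegree hpm.ne_zero,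
      Polynomial.degree_eq_natDegree (hpm.pow 2).ne_zero, hpm.natDegree_pow]
    exact_mod_cast by omega
  set h : S := Polynomial.aeval t q with hh
  have hhval : h = g ^ 2 - algebraMap R S a * g := by
    rw [hh, hq, map_sub, map_mul, map_pow, aeval_C, hg]
  have hhf : h ∈ Ideal.span {f} := by
    rw [hhval]
    exact Ideal.sub_mem _ (by simpa [sq] using Ideal.mul_mem_left _ g hgf)
      (Ideal.mul_mem_left _ _ hgf)
  have hhker : h ∈ RingHom.ker (ε : S →+* R) := by
    rw [RingHom.mem_ker]
    have h3 : (ε : S →+* R) h = ε g ^ 2 - a * ε g := by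
      show ε h = ε g ^ 2 - a * ε g
      rw [hhval, map_sub, map_mul, map_pow, ε.commutes, Algebra.algebraMap_self_apply]
    rw [h3, ← ha]
    ring
  have hhA : h ∈ (Algebra.adjoin R ({t} : Set S) : Set S) := by
    rw [hh]
    exact (Algebra.adjoin_singleton_eq_range_aeval R t) ▸ ⟨q, rfl⟩
  have hle : Ideal.span {h} ≤ J' := by
    rw [Ideal.span_le, Set.singleton_subset_iff]
    exact Ideal.subset_span ⟨⟨hhf, hhker⟩, hhA⟩
  have hfin : Module.Finite R (S ⧸ Ideal.span {h}) := quot_aeval_finite t hS hqm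
  have hsecond : Module.Finite R (S ⧸ J') := quot_mono_finite hle hfin
  have hJ'J : J' ≤ J := by
    rw [hJ', Ideal.span_le]
    exact fun x hx => hx.1
  exact ⟨quot_mono_finite hJ'J hsecond, hsecond⟩
end

section
/- (Lemma 2(i)) Let R be a local ring and S a commutative R-algebra with structure map i : R → S and an R-algebra homomorphism ε : S → R satisfying ε ∘ i = id_R. Assume there is t ∈ S such that S is a finite module over the R-subalgebra R[t] ⊆ S generated by t, and let f ∈ S be such that S/(f) is a finite R-module. Put I = ker ε, J = (f) ∩ I, J' = (J ∩ R[t])S, and let M be the set of all g ∈ S lying outside every maximal ideal of S that contains J'. Then for every g ∈ M, the quotient S_g/(f)S_g of the localization S_g is a finite R-module. -/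
/-- **Lemma 2(i).**  Let `R` be a local ring, `S` an `R`-algebra with augmentation
`ε : S → R`, `t ∈ S` with `S` finite over `R[t]`, and `f ∈ S` with `S/(f)` a finite
`R`-module.  With `I = ker ε`, `J = (f) ⊓ I`, `J' = (J ∩ R[t])S` and `M` the set of elements
of `S` lying outside every maximal ideal containing `J'`, for every `g ∈ M` the quotient
`S_g/(f)S_g` is a finite `R`-module. -/
theorem lemma_two_i
    (R : Type) [CommRing R] [IsLocalRing R]
    (S : Type) [CommRing S] [Algebra R S]
    (ε : S →ₐ[R] R)
    (t : S) (hS : Module.Finite (Algebra.adjoin R {t}) S)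
    (f : S) (hf : Module.Finite R (S ⧸ Ideal.span {f}))
    (g : S)
    (hg : ∀ 𝔪 : Ideal S, 𝔪.IsMaximal →
      Ideal.span ((((Ideal.span {f} ⊓ RingHom.ker (ε : S →+* R)) : Ideal S) : Set S) ∩
        (Algebra.adjoin R {t} : Set S)) ≤ 𝔪 → g ∉ 𝔪) :
    Module.Finite R
      (Localization.Away g ⧸
        Ideal.span {algebraMap S (Localization.Away g) f}) := by
  classical
  set Jset : Set S := ((((Ideal.span {f} ⊓ RingHom.ker (ε : S →+* R)) : Ideal S) : Set S) ∩
        (Algebra.adjoin R {t} : Set S)) with hJset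
  have htop : Ideal.span Jset ⊔ Ideal.span {g} = ⊤ := by
    by_contra h
    obtain ⟨𝔪, hmax, hle⟩ := Ideal.exists_le_maximal _ h
    exact hg 𝔪 hmax (le_trans le_sup_left hle)
      (hle (Ideal.mem_sup_right (Ideal.mem_span_singleton_self g)))
  have h1 : (1 : S) ∈ Ideal.span Jset ⊔ Ideal.span {g} := htop ▸ Submodule.mem_top
  obtain ⟨j, hj, x, hx, hjx⟩ := Submodule.mem_sup.mp h1
  have hjf : j ∈ Ideal.span {f} := by
    have hle : Ideal.span Jset ≤ Ideal.span {f} :=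
      Ideal.span_le.mpr (fun y hy => hy.1.1)
    exact hle hj
  obtain ⟨c, hc⟩ := Ideal.mem_span_singleton'.mp hjf
  obtain ⟨s, hs⟩ := Ideal.mem_span_singleton'.mp hx
  -- s * g = 1 - c * f
  have key : s * g = 1 - c * f := by linear_combination hs + hjx + hc
  set A := Localization.Away g with hA
  set φ : S →+* A := algebraMap S A with hφ
  set Q : Ideal A := Ideal.span {algebraMap S A f} with hQ
  have hfQ : (Ideal.Quotient.mk Q) (φ f) = 0 := by
    rw [Ideal.Quotient.eq_zero_iff_mem]
    exact Ideal.mem_span_singleton_self _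
  let ψ0 : S →ₐ[R] A ⧸ Q := (Ideal.Quotient.mkₐ R Q).comp (IsScalarTower.toAlgHom R S A)
  have hker : ∀ a ∈ Ideal.span {f}, ψ0 a = 0 := by
    intro a ha
    obtain ⟨d, hd⟩ := Ideal.mem_span_singleton'.mp ha
    show (Ideal.Quotient.mk Q) (φ a) = 0
    rw [← hd, map_mul, map_mul, hfQ, mul_zero]
  let ψ : (S ⧸ Ideal.span {f}) →ₐ[R] A ⧸ Q := Ideal.Quotient.liftₐ _ ψ0 hker
  have hψ : ∀ a : S, ψ (Ideal.Quotient.mk _ a) = Ideal.Quotient.mk Q (φ a) := fun a => rfl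
  have hunit : (Ideal.Quotient.mk Q (φ g)) * (Ideal.Quotient.mk Q (φ s)) = 1 := by
    rw [← map_mul, ← map_mul]
    have : g * s = 1 - c * f := by linear_combination key
    rw [this, map_sub, map_mul, map_one, map_sub, map_mul, map_one, hfQ, mul_zero, sub_zero]
  have hsurj : Function.Surjective ψ := by
    intro y
    obtain ⟨a, rfl⟩ := Ideal.Quotient.mk_surjective y
    obtain ⟨⟨r, m⟩, hm⟩ := IsLocalization.surj (Submonoid.powers g) a
    obtain ⟨n, hn⟩ := m.2
    refine ⟨Ideal.Quotient.mk _ (r * s ^ n), ?_⟩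
    rw [hψ]
    have hn' : g ^ n = (m : S) := hn
    have hm' : a * φ (g ^ n) = φ r := by
      rw [hn']; exact hm
    calc (Ideal.Quotient.mk Q) (φ (r * s ^ n))
        = (Ideal.Quotient.mk Q) (φ r) * ((Ideal.Quotient.mk Q) (φ s)) ^ n := by
          rw [map_mul, map_pow, map_mul, map_pow]
      _ = (Ideal.Quotient.mk Q) a * (((Ideal.Quotient.mk Q) (φ g)) *
            ((Ideal.Quotient.mk Q) (φ s))) ^ n := by
          rw [← hm', map_mul, map_pow, map_pow, mul_pow]; ring
      _ = (Ideal.Quotient.mk Q) a := by rw [hunit, one_pow, mul_one]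
  exact Module.Finite.of_surjective ψ.toLinearMap hsurj
end

section
/- (Lemma 5, approximation) Let R be a local ring with infinite residue field k, and let A be an R-algebra that is free of finite rank n as an R-module. Fix an R-basis of A, identify A with R^n, and endow A with the lifted topology. Let A^× be the set of units of A and let V ⊆ A^× be a nonempty subset that is open in A for the lifted topology. Then for every a ∈ A^× there exist v_1, v_2 ∈ V with a = v_1 · v_2. -/
open Topology

/-- The Zariski topology on affine space `k^ι` over a commutative ring `k`: the topology
generated by the basic open sets `{x | f(x) ≠ 0}` for polynomials `f`. -/
def zariskiTopology (k : Type) [CommRing k] (ι : Type) : TopologicalSpace (ι → k) :=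
  TopologicalSpace.generateFrom
    {U | ∃ f : MvPolynomial ι k, U = {x | MvPolynomial.eval x f ≠ 0}}

/-- The lifted topology on `R^ι` for a local ring `R`: the topology induced from the Zariski
topology on affine space over the residue field `k = R/𝔪` via coordinatewise reduction
(equivalently, generated by the subbase of preimages of the basic Zariski-open sets). -/
noncomputable def liftedTopology (R : Type) [CommRing R] [IsLocalRing R] (ι : Type) :
    TopologicalSpace (ι → R) :=
  TopologicalSpace.induced (fun x i => IsLocalRing.residue R (x i))
    (zariskiTopology (IsLocalRing.ResidueField R) ι)

private lemma zariski_mem_basic {k : Type} [Field k] {ι : Type} {W : Set (ι → k)}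
    (hW : TopologicalSpace.GenerateOpen
      {U | ∃ f : MvPolynomial ι k, U = {x | MvPolynomial.eval x f ≠ 0}} W) :
    ∀ y ∈ W, ∃ f : MvPolynomial ι k, MvPolynomial.eval y f ≠ 0 ∧
      {x | MvPolynomial.eval x f ≠ 0} ⊆ W := by
  induction hW with
  | basic U hU =>
      obtain ⟨f, rfl⟩ := hU
      exact fun y hy => ⟨f, hy, fun x hx => hx⟩
  | univ => exact fun y _ => ⟨1, by simp, fun x _ => trivial⟩
  | inter U U' hU hU' ihU ihU' =>
      rintro y ⟨hyU, hyU'⟩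
      obtain ⟨f, hf, hfs⟩ := ihU y hyU
      obtain ⟨g, hg, hgs⟩ := ihU' y hyU'
      refine ⟨f * g, by simp only [map_mul]; exact mul_ne_zero hf hg, fun x hx => ?_⟩
      simp only [Set.mem_setOf_eq, map_mul] at hx
      exact ⟨hfs fun h => hx (by rw [h, zero_mul]),
        hgs fun h => hx (by rw [h, mul_zero])⟩
  | sUnion S hS ih =>
      rintro y ⟨s, hs, hys⟩
      obtain ⟨f, hf, hfs⟩ := ih s hs y hys
      exact ⟨f, hf, fun x hx => ⟨s, hs, hfs hx⟩⟩

private lemma eval_inv_mul_pow {k : Type} [Field k] {n : ℕ} (f : MvPolynomial (Fin n) k)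
    (u : Fin n → k) (c : k) (hc : c ≠ 0) :
    MvPolynomial.eval (fun i => c⁻¹ * u i) f * c ^ f.totalDegree =
      ∑ σ ∈ f.support, MvPolynomial.coeff σ f * (∏ i, u i ^ σ i) *
        c ^ (f.totalDegree - σ.sum fun _ e => e) := by
  rw [MvPolynomial.eval_eq', Finset.sum_mul]
  refine Finset.sum_congr rfl fun σ hσ => ?_
  have hs : (σ.sum fun _ e => e) = ∑ i, σ i := Finsupp.sum_fintype _ _ (fun _ => rfl)
  have hle : (σ.sum fun _ e => e) ≤ f.totalDegree := MvPolynomial.le_totalDegree hσ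
  have h1 : ∏ i, (c⁻¹ * u i) ^ σ i = c⁻¹ ^ (∑ i, σ i) * ∏ i, u i ^ σ i := by
    rw [← Finset.prod_pow_eq_pow_sum, ← Finset.prod_mul_distrib]
    exact Finset.prod_congr rfl fun i _ => mul_pow _ _ _
  rw [h1, ← hs]
  have h2 : c⁻¹ ^ (σ.sum fun _ e => e) * c ^ f.totalDegree
      = c ^ (f.totalDegree - σ.sum fun _ e => e) := by
    rw [inv_pow, inv_mul_eq_iff_eq_mul₀ (pow_ne_zero _ hc), ← pow_add,
      Nat.add_sub_cancel' hle]
  rw [← h2]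
  ring

private lemma isUnit_mulLeft_end {k B : Type} [CommRing k] [Ring B] [Algebra k B]
    {y : B} (h : IsUnit y) :
    IsUnit (LinearMap.mulLeft k y : Module.End k B) := by
  obtain ⟨u, rfl⟩ := h
  refine ⟨⟨LinearMap.mulLeft k (u : B), LinearMap.mulLeft k ((u⁻¹ : Bˣ) : B), ?_, ?_⟩, rfl⟩
  · ext x; simp [Module.End.mul_apply, ← mul_assoc]
  · ext x; simp [Module.End.mul_apply, ← mul_assoc]

private lemma isUnit_mulRight_end {k B : Type} [CommRing k] [Ring B] [Algebra k B]
    {y : B} (h : IsUnit y) :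
    IsUnit (LinearMap.mulRight k y : Module.End k B) := by
  obtain ⟨u, rfl⟩ := h
  refine ⟨⟨LinearMap.mulRight k (u : B), LinearMap.mulRight k ((u⁻¹ : Bˣ) : B), ?_, ?_⟩, rfl⟩
  · ext x; simp [Module.End.mul_apply, mul_assoc]
  · ext x; simp [Module.End.mul_apply, mul_assoc]

private lemma isUnit_of_det_isUnit {R A : Type} [CommRing R] [Ring A] [Algebra R A]
    {n : ℕ} (b : Module.Basis (Fin n) R A) {x : A}
    (hL : IsUnit (LinearMap.det (LinearMap.mulLeft R x)))
    (hR : IsUnit (LinearMap.det (LinearMap.mulRight R x))) : IsUnit x := by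
  classical
  have key : ∀ g : Module.End R A, IsUnit (LinearMap.det g) → Function.Surjective g := by
    intro g hg
    have hmat : LinearMap.toMatrixAlgEquiv b g = LinearMap.toMatrix b b g := by
      ext i j
      rw [LinearMap.toMatrixAlgEquiv_apply, LinearMap.toMatrix_apply]
    have h1 : IsUnit (LinearMap.toMatrixAlgEquiv b g) := by
      rw [Matrix.isUnit_iff_isUnit_det, hmat, LinearMap.det_toMatrix]
      exact hg
    have h2 : IsUnit g := by
      have h3 := h1.map (LinearMap.toMatrixAlgEquiv b).symm
      rwa [AlgEquiv.symm_apply_apply] at h3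
    exact ((Module.End.isUnit_iff g).mp h2).2
  obtain ⟨y, hy⟩ := key _ hL 1
  obtain ⟨z, hz⟩ := key _ hR 1
  rw [LinearMap.mulLeft_apply] at hy
  rw [LinearMap.mulRight_apply] at hz
  have hzy : z = y := by
    calc z = z * (x * y) := by rw [hy, mul_one]
    _ = z * x * y := by rw [mul_assoc]
    _ = y := by rw [hz, one_mul]
  exact ⟨⟨x, y, hy, hzy ▸ hz⟩, rfl⟩

noncomputable section ApproxAux

open IsLocalRing Polynomial
open scoped Matrix

variable {R A : Type} [CommRing R] [IsLocalRing R] [Ring A] [Algebra R A] {n : ℕ}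

/-- coordinatewise residue of the coordinates w.r.t. the basis `b`. -/
private def Fc (b : Module.Basis (Fin n) R A) (x : A) : Fin n → ResidueField R :=
  fun i => residue R (b.repr x i)

private def piA (R A : Type) [CommRing R] [IsLocalRing R] [Ring A] [Algebra R A] :
    A →ₐ[R] (TensorProduct R (ResidueField R) A) :=
  Algebra.TensorProduct.includeRight

private lemma Fc_eq (b : Module.Basis (Fin n) R A) (x : A) (i : Fin n) :
    (b.baseChange (ResidueField R)).repr (piA R A x) i = Fc b x i := by
  rw [piA, Algebra.TensorProduct.includeRight_apply, Module.Basis.baseChange_repr_tmul,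
    Algebra.smul_def, mul_one, ResidueField.algebraMap_eq]
  rfl

private def rmat (b : Module.Basis (Fin n) R A) (y : TensorProduct R (ResidueField R) A) :
    Matrix (Fin n) (Fin n) (ResidueField R) :=
  LinearMap.toMatrix (b.baseChange (ResidueField R)) (b.baseChange (ResidueField R))
    (LinearMap.mulRight (ResidueField R) y)

private def lmat (b : Module.Basis (Fin n) R A) (y : TensorProduct R (ResidueField R) A) :
    Matrix (Fin n) (Fin n) (ResidueField R) :=
  LinearMap.toMatrix (b.baseChange (ResidueField R)) (b.baseChange (ResidueField R))
    (LinearMap.mulLeft (ResidueField R) y)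

private lemma rmat_add_smul (b : Module.Basis (Fin n) R A)
    (x y : TensorProduct R (ResidueField R) A) (s : ResidueField R) :
    rmat b (x + s • y) = rmat b x + s • rmat b y := by
  unfold rmat
  rw [show LinearMap.mulRight (ResidueField R) (x + s • y)
      = LinearMap.mulRight (ResidueField R) x + s • LinearMap.mulRight (ResidueField R) y by
    ext z; simp [mul_add, mul_smul_comm], map_add, map_smul]

private lemma lmat_add_smul (b : Module.Basis (Fin n) R A)
    (x y : TensorProduct R (ResidueField R) A) (s : ResidueField R) :
    lmat b (x + s • y) = lmat b x + s • lmat b y := by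
  unfold lmat
  rw [show LinearMap.mulLeft (ResidueField R) (x + s • y)
      = LinearMap.mulLeft (ResidueField R) x + s • LinearMap.mulLeft (ResidueField R) y by
    ext z; simp [add_mul, smul_mul_assoc], map_add, map_smul]

private def NP (b : Module.Basis (Fin n) R A) (v w : A) :
    Matrix (Fin n) (Fin n) (Polynomial (ResidueField R)) :=
  (rmat b (piA R A v)).map Polynomial.C +
    (Polynomial.X : Polynomial (ResidueField R)) • (rmat b (piA R A w)).map Polynomial.C

private def MP (b : Module.Basis (Fin n) R A) (v w : A) :
    Matrix (Fin n) (Fin n) (Polynomial (ResidueField R)) :=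
  (lmat b (piA R A v)).map Polynomial.C +
    (Polynomial.X : Polynomial (ResidueField R)) • (lmat b (piA R A w)).map Polynomial.C

private lemma map_NP (b : Module.Basis (Fin n) R A) (v w : A) (s : ResidueField R) :
    (NP b v w).map (evalRingHom s) = rmat b (piA R A v + s • piA R A w) := by
  rw [rmat_add_smul]
  ext i j
  simp [NP, Matrix.map_apply, Matrix.add_apply, Matrix.smul_apply, smul_eq_mul]
  ring

private lemma map_MP (b : Module.Basis (Fin n) R A) (v w : A) (s : ResidueField R) :
    (MP b v w).map (evalRingHom s) = lmat b (piA R A v + s • piA R A w) := by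
  rw [lmat_add_smul]
  ext i j
  simp [MP, Matrix.map_apply, Matrix.add_apply, Matrix.smul_apply, smul_eq_mul]
  ring

private lemma det_rmat_eval (b : Module.Basis (Fin n) R A) (v w : A) (s : ResidueField R) :
    (rmat b (piA R A v + s • piA R A w)).det = Polynomial.eval s (NP b v w).det := by
  rw [← map_NP, ← RingHom.mapMatrix_apply, ← RingHom.map_det, coe_evalRingHom]

private lemma det_lmat_eval (b : Module.Basis (Fin n) R A) (v w : A) (s : ResidueField R) :
    (lmat b (piA R A v + s • piA R A w)).det = Polynomial.eval s (MP b v w).det := by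
  rw [← map_MP, ← RingHom.mapMatrix_apply, ← RingHom.map_det, coe_evalRingHom]

private lemma map_toMatrix_mulRight (b : Module.Basis (Fin n) R A) (x : A) :
    (LinearMap.toMatrix b b (LinearMap.mulRight R x)).map (residue R) = rmat b (piA R A x) := by
  ext i j
  rw [Matrix.map_apply, LinearMap.toMatrix_apply, LinearMap.mulRight_apply]
  rw [rmat, LinearMap.toMatrix_apply, LinearMap.mulRight_apply, Module.Basis.baseChange_apply]
  rw [show (1 : ResidueField R) ⊗ₜ[R] b j * piA R A x = piA R A (b j * x) by
    rw [map_mul]; rw [show piA R A (b j) = (1 : ResidueField R) ⊗ₜ[R] b j from rfl]]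
  rw [Fc_eq]
  rfl

private lemma map_toMatrix_mulLeft (b : Module.Basis (Fin n) R A) (x : A) :
    (LinearMap.toMatrix b b (LinearMap.mulLeft R x)).map (residue R) = lmat b (piA R A x) := by
  ext i j
  rw [Matrix.map_apply, LinearMap.toMatrix_apply, LinearMap.mulLeft_apply]
  rw [lmat, LinearMap.toMatrix_apply, LinearMap.mulLeft_apply, Module.Basis.baseChange_apply]
  rw [show piA R A x * (1 : ResidueField R) ⊗ₜ[R] b j = piA R A (x * b j) by
    rw [map_mul]; rw [show piA R A (b j) = (1 : ResidueField R) ⊗ₜ[R] b j from rfl]]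
  rw [Fc_eq]
  rfl

private lemma residue_det_mulRight (b : Module.Basis (Fin n) R A) (x : A) :
    residue R (LinearMap.det (LinearMap.mulRight R x)) = (rmat b (piA R A x)).det := by
  classical
  rw [← LinearMap.det_toMatrix b, RingHom.map_det, RingHom.mapMatrix_apply,
    map_toMatrix_mulRight]

private lemma residue_det_mulLeft (b : Module.Basis (Fin n) R A) (x : A) :
    residue R (LinearMap.det (LinearMap.mulLeft R x)) = (lmat b (piA R A x)).det := by
  classical
  rw [← LinearMap.det_toMatrix b, RingHom.map_det, RingHom.mapMatrix_apply,
    map_toMatrix_mulLeft]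

private lemma rmat_det_ne_zero (b : Module.Basis (Fin n) R A)
    {y : TensorProduct R (ResidueField R) A} (h : IsUnit y) : (rmat b y).det ≠ 0 := by
  rw [rmat, LinearMap.det_toMatrix]
  exact ((isUnit_mulRight_end h).map
    (LinearMap.det : Module.End (ResidueField R) (TensorProduct R (ResidueField R) A)
      →* ResidueField R)).ne_zero

private lemma lmat_det_ne_zero (b : Module.Basis (Fin n) R A)
    {y : TensorProduct R (ResidueField R) A} (h : IsUnit y) : (lmat b y).det ≠ 0 := by
  rw [lmat, LinearMap.det_toMatrix]
  exact ((isUnit_mulLeft_end h).map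
    (LinearMap.det : Module.End (ResidueField R) (TensorProduct R (ResidueField R) A)
      →* ResidueField R)).ne_zero

private lemma coords_inverse (b : Module.Basis (Fin n) R A) (v w a x cA : A) (s : ResidueField R)
    (hds : Polynomial.eval s (NP b v w).det ≠ 0)
    (hc : piA R A cA = piA R A v + s • piA R A w)
    (hxc : x * cA = a) :
    ∀ i, Polynomial.eval s (NP b v w).det * Fc b x i =
      Polynomial.eval s (((NP b v w).adjugate *ᵥ (fun j => Polynomial.C (Fc b a j))) i) := by
  classical
  have hNev : (NP b v w).map (evalRingHom s) = rmat b (piA R A cA) := by rw [map_NP, ← hc]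
  have hdetN : (rmat b (piA R A cA)).det = Polynomial.eval s (NP b v w).det := by
    rw [← hNev, ← RingHom.mapMatrix_apply, ← RingHom.map_det, coe_evalRingHom]
  have hstep1 : rmat b (piA R A cA) *ᵥ (Fc b x) = Fc b a := by
    have h := LinearMap.toMatrix_mulVec_repr (b.baseChange (ResidueField R))
      (b.baseChange (ResidueField R))
      (LinearMap.mulRight (ResidueField R) (piA R A cA)) (piA R A x)
    have h2 : (⇑((b.baseChange (ResidueField R)).repr (piA R A x)) : Fin n → ResidueField R)
        = Fc b x := funext fun i => Fc_eq b x i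
    have h3 : LinearMap.mulRight (ResidueField R) (piA R A cA) (piA R A x) = piA R A a := by
      rw [LinearMap.mulRight_apply, ← map_mul, hxc]
    rw [h2, h3] at h
    rw [rmat, h]
    exact funext fun i => Fc_eq b a i
  have hstep2 : rmat b (piA R A cA) *ᵥ
        (⇑(evalRingHom s) ∘ ((NP b v w).adjugate *ᵥ (fun j => Polynomial.C (Fc b a j))))
      = fun i => Polynomial.eval s (NP b v w).det * Fc b a i := by
    have hNPadj : (NP b v w) *ᵥ ((NP b v w).adjugate *ᵥ (fun j => Polynomial.C (Fc b a j)))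
        = fun i => (NP b v w).det * Polynomial.C (Fc b a i) := by
      rw [Matrix.mulVec_mulVec, Matrix.mul_adjugate, Matrix.smul_mulVec,
        Matrix.one_mulVec]
      rfl
    funext i
    have h4 := RingHom.map_mulVec (evalRingHom s) (NP b v w)
      ((NP b v w).adjugate *ᵥ (fun j => Polynomial.C (Fc b a j))) i
    rw [hNPadj, hNev] at h4
    simp only [coe_evalRingHom, eval_mul, eval_C] at h4
    exact h4.symm
  have hNdet : (rmat b (piA R A cA)).det ≠ 0 := by rw [hdetN]; exact hds
  have hNunit : IsUnit (rmat b (piA R A cA)) :=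
    (Matrix.isUnit_iff_isUnit_det _).mpr (isUnit_iff_ne_zero.mpr hNdet)
  have hinj : ∀ p q : Fin n → ResidueField R,
      rmat b (piA R A cA) *ᵥ p = rmat b (piA R A cA) *ᵥ q → p = q := by
    intro p q h
    obtain ⟨Nu, hNu⟩ := hNunit
    rw [← hNu] at h
    have h5 : ∀ r : Fin n → ResidueField R,
        (↑Nu⁻¹ : Matrix (Fin n) (Fin n) (ResidueField R)) *ᵥ
          ((↑Nu : Matrix (Fin n) (Fin n) (ResidueField R)) *ᵥ r) = r := by
      intro r
      rw [Matrix.mulVec_mulVec, Units.inv_mul, Matrix.one_mulVec]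
    rw [← h5 p, ← h5 q, h]
  have hfinal : (fun i => Polynomial.eval s (NP b v w).det * Fc b x i)
      = ⇑(evalRingHom s) ∘ ((NP b v w).adjugate *ᵥ (fun j => Polynomial.C (Fc b a j))) := by
    apply hinj
    rw [show ((fun i => Polynomial.eval s (NP b v w).det * Fc b x i) : Fin n → ResidueField R)
        = Polynomial.eval s (NP b v w).det • Fc b x from rfl,
      Matrix.mulVec_smul, hstep1, hstep2]
    rfl
  intro i
  exact congrFun hfinal i

private lemma eval_p2 (b : Module.Basis (Fin n) R A) (v w a : A)
    (f : MvPolynomial (Fin n) (ResidueField R)) (s : ResidueField R)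
    (hds : Polynomial.eval s (NP b v w).det ≠ 0)
    (x cA : A) (hc : piA R A cA = piA R A v + s • piA R A w) (hxc : x * cA = a) :
    MvPolynomial.eval (Fc b x) f * (Polynomial.eval s (NP b v w).det) ^ f.totalDegree =
      Polynomial.eval s (∑ σ ∈ f.support, Polynomial.C (MvPolynomial.coeff σ f) *
        (∏ i, (((NP b v w).adjugate *ᵥ (fun j => Polynomial.C (Fc b a j))) i) ^ σ i) *
        (NP b v w).det ^ (f.totalDegree - σ.sum fun _ e => e)) := by
  classical
  have hco := coords_inverse b v w a x cA s hds hc hxc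
  have hFx : Fc b x = fun i => (Polynomial.eval s (NP b v w).det)⁻¹ *
      Polynomial.eval s (((NP b v w).adjugate *ᵥ (fun j => Polynomial.C (Fc b a j))) i) := by
    funext i
    rw [← hco i, inv_mul_cancel_left₀ hds]
  rw [hFx, eval_inv_mul_pow f _ _ hds, Polynomial.eval_finset_sum]
  refine Finset.sum_congr rfl fun σ hσ => ?_
  simp [Polynomial.eval_prod]

end ApproxAux

/-- **Lemma 5 (approximation).**  Let `R` be a local ring with infinite residue field and `A`
an `R`-algebra free of rank `n` as an `R`-module; fix a basis and endow `A ≅ R^n` with the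
lifted topology.  If `V` is a nonempty open subset of `A` consisting of units, then every
unit of `A` is a product of two elements of `V`. -/
theorem approximation_lemma
    (R : Type) [CommRing R] [IsLocalRing R] [Infinite (IsLocalRing.ResidueField R)]
    (n : ℕ) (A : Type) [Ring A] [Algebra R A] (b : Module.Basis (Fin n) R A)
    (V : Set A)
    (hVunits : V ⊆ {a : A | IsUnit a})
    (hVopen : IsOpen[TopologicalSpace.induced (fun a i => b.repr a i)
      (liftedTopology R (Fin n))] V)
    (hVne : V.Nonempty)
    (a : A) (ha : IsUnit a) :
    ∃ v₁ ∈ V, ∃ v₂ ∈ V, a = v₁ * v₂ := by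
  classical
  obtain ⟨v₀, hv₀V⟩ := hVne
  have hv₀u : IsUnit v₀ := hVunits hv₀V
  -- Step A : describe V via a Zariski open set W
  rw [liftedTopology, induced_compose] at hVopen
  obtain ⟨W, hWopen, hWV⟩ :=
    (@isOpen_induced_iff _ _ (zariskiTopology (IsLocalRing.ResidueField R) (Fin n)) V _).mp hVopen
  have hmemV : ∀ x : A, x ∈ V ↔ Fc b x ∈ W := by
    intro x
    rw [← hWV]
    exact Iff.rfl
  obtain ⟨f, hf0, hfW⟩ := zariski_mem_basic hWopen (Fc b v₀) ((hmemV v₀).mp hv₀V)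
  have hmemV' : ∀ x : A, MvPolynomial.eval (Fc b x) f ≠ 0 → x ∈ V :=
    fun x hx => (hmemV x).mpr (hfW hx)
  -- the second endpoint of the pencil
  set u : A := (↑hv₀u.unit⁻¹ : A) * a with hu_def
  have huu : IsUnit u := (Units.isUnit _).mul ha
  have hv₀mul : v₀ * u = a := by
    rw [hu_def, ← mul_assoc, hv₀u.mul_val_inv, one_mul]
  -- the pencil in the residue algebra
  have hπc : ∀ t : R, piA R A (v₀ + t • (u - v₀))
      = piA R A v₀ + IsLocalRing.residue R t • piA R A (u - v₀) := by
    intro t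
    rw [map_add, map_smul, ← algebraMap_smul (IsLocalRing.ResidueField R) t
      (piA R A (u - v₀)), IsLocalRing.ResidueField.algebraMap_eq]
  have hπc1 : piA R A v₀ + (1 : IsLocalRing.ResidueField R) • piA R A (u - v₀)
      = piA R A u := by
    rw [one_smul, map_sub, add_sub_cancel]
  have hFct : ∀ t : R, Fc b (v₀ + t • (u - v₀))
      = fun i => Fc b v₀ i + IsLocalRing.residue R t * Fc b (u - v₀) i := by
    intro t; funext i
    show IsLocalRing.residue R (b.repr (v₀ + t • (u - v₀)) i) = _
    rw [map_add, map_smul, Finsupp.add_apply, Finsupp.smul_apply, smul_eq_mul,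
      map_add, map_mul]
    rfl
  -- the polynomials controlling the two membership conditions
  set p₁ := MvPolynomial.eval₂ Polynomial.C
    (fun i => Polynomial.C (Fc b v₀ i) + Polynomial.X * Polynomial.C (Fc b (u - v₀) i)) f
    with hp₁def
  have hp₁ : ∀ s : IsLocalRing.ResidueField R, Polynomial.eval s p₁
      = MvPolynomial.eval (fun i => Fc b v₀ i + s * Fc b (u - v₀) i) f := by
    intro s
    have h := MvPolynomial.eval₂_comp_left (Polynomial.evalRingHom s) Polynomial.C
      (fun i => Polynomial.C (Fc b v₀ i) + Polynomial.X * Polynomial.C (Fc b (u - v₀) i)) f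
    have h2 : (Polynomial.evalRingHom s).comp Polynomial.C
        = RingHom.id (IsLocalRing.ResidueField R) := by
      ext r; simp
    have h3 : (⇑(Polynomial.evalRingHom s) ∘ fun i =>
        Polynomial.C (Fc b v₀ i) + Polynomial.X * Polynomial.C (Fc b (u - v₀) i))
        = fun i => Fc b v₀ i + s * Fc b (u - v₀) i := by
      funext i; simp; ring
    rw [h2, h3, MvPolynomial.eval₂_id] at h
    exact h
  set d : Polynomial (IsLocalRing.ResidueField R) := (NP b v₀ (u - v₀)).det with hd_def
  set d' : Polynomial (IsLocalRing.ResidueField R) := (MP b v₀ (u - v₀)).det with hd'_def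
  set η := ((NP b v₀ (u - v₀)).adjugate).mulVec (fun j => Polynomial.C (Fc b a j)) with hη_def
  set p₂ := ∑ σ ∈ f.support, Polynomial.C (MvPolynomial.coeff σ f) * (∏ i, η i ^ σ i) *
    d ^ (f.totalDegree - σ.sum fun _ e => e) with hp₂def
  -- units along the pencil
  have hkey : ∀ t : R, Polynomial.eval (IsLocalRing.residue R t) d ≠ 0 →
      Polynomial.eval (IsLocalRing.residue R t) d' ≠ 0 → IsUnit (v₀ + t • (u - v₀)) := by
    intro t hd hd'
    refine isUnit_of_det_isUnit b ?_ ?_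
    · apply (IsLocalRing.residue_ne_zero_iff_isUnit _).mp
      rw [residue_det_mulLeft b, hπc t, det_lmat_eval]
      exact hd'
    · apply (IsLocalRing.residue_ne_zero_iff_isUnit _).mp
      rw [residue_det_mulRight b, hπc t, det_rmat_eval]
      exact hd
  -- non-vanishing at the endpoints
  have hd1 : Polynomial.eval (1 : IsLocalRing.ResidueField R) d ≠ 0 := by
    show Polynomial.eval (1 : IsLocalRing.ResidueField R) (NP b v₀ (u - v₀)).det ≠ 0
    rw [← det_rmat_eval b v₀ (u - v₀) 1, hπc1]
    exact rmat_det_ne_zero b (huu.map (piA R A))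
  have hd'1 : Polynomial.eval (1 : IsLocalRing.ResidueField R) d' ≠ 0 := by
    show Polynomial.eval (1 : IsLocalRing.ResidueField R) (MP b v₀ (u - v₀)).det ≠ 0
    rw [← det_lmat_eval b v₀ (u - v₀) 1, hπc1]
    exact lmat_det_ne_zero b (huu.map (piA R A))
  have hp21 : MvPolynomial.eval (Fc b v₀) f
      * (Polynomial.eval (1 : IsLocalRing.ResidueField R) d) ^ f.totalDegree
      = Polynomial.eval (1 : IsLocalRing.ResidueField R) p₂ :=
    eval_p2 b v₀ (u - v₀) a f 1 hd1 v₀ u hπc1.symm hv₀mul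
  have hp₂1 : Polynomial.eval (1 : IsLocalRing.ResidueField R) p₂ ≠ 0 := by
    rw [← hp21]; exact mul_ne_zero hf0 (pow_ne_zero _ hd1)
  have hp₁0 : Polynomial.eval (0 : IsLocalRing.ResidueField R) p₁ ≠ 0 := by
    rw [hp₁ 0]
    have h5 : (fun i => Fc b v₀ i + 0 * Fc b (u - v₀) i) = Fc b v₀ := by
      funext i; ring
    rw [h5]; exact hf0
  -- choose a good parameter
  have hPne : p₁ * (p₂ * (d * d')) ≠ 0 := by
    have h1 : p₁ ≠ 0 := fun h => hp₁0 (by rw [h, Polynomial.eval_zero])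
    have h2 : p₂ ≠ 0 := fun h => hp₂1 (by rw [h, Polynomial.eval_zero])
    have h3 : d ≠ 0 := fun h => hd1 (by rw [h, Polynomial.eval_zero])
    have h4 : d' ≠ 0 := fun h => hd'1 (by rw [h, Polynomial.eval_zero])
    exact mul_ne_zero h1 (mul_ne_zero h2 (mul_ne_zero h3 h4))
  obtain ⟨s0, hs0⟩ : ∃ s0 : IsLocalRing.ResidueField R,
      Polynomial.eval s0 (p₁ * (p₂ * (d * d'))) ≠ 0 := by
    by_contra hcon
    push_neg at hcon
    exact hPne (Polynomial.zero_of_eval_zero _ hcon)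
  rw [Polynomial.eval_mul, Polynomial.eval_mul, Polynomial.eval_mul] at hs0
  have hs1 : Polynomial.eval s0 p₁ ≠ 0 := left_ne_zero_of_mul hs0
  have hs2 : Polynomial.eval s0 p₂ ≠ 0 := left_ne_zero_of_mul (right_ne_zero_of_mul hs0)
  have hs3 : Polynomial.eval s0 d ≠ 0 :=
    left_ne_zero_of_mul (right_ne_zero_of_mul (right_ne_zero_of_mul hs0))
  have hs4 : Polynomial.eval s0 d' ≠ 0 :=
    right_ne_zero_of_mul (right_ne_zero_of_mul (right_ne_zero_of_mul hs0))
  obtain ⟨t, rfl⟩ := IsLocalRing.residue_surjective (R := R) s0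
  have hcu : IsUnit (v₀ + t • (u - v₀)) := hkey t hs3 hs4
  -- v₂ belongs to V
  have hv₂V : (v₀ + t • (u - v₀)) ∈ V := by
    apply hmemV'
    rw [hFct t, ← hp₁ (IsLocalRing.residue R t)]
    exact hs1
  -- v₁ belongs to V
  have hxc : (a * ↑hcu.unit⁻¹) * (v₀ + t • (u - v₀)) = a := by
    rw [mul_assoc, hcu.val_inv_mul, mul_one]
  have hp2t : MvPolynomial.eval (Fc b (a * ↑hcu.unit⁻¹)) f
      * (Polynomial.eval (IsLocalRing.residue R t) d) ^ f.totalDegree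
      = Polynomial.eval (IsLocalRing.residue R t) p₂ :=
    eval_p2 b v₀ (u - v₀) a f _ hs3 _ _ (hπc t) hxc
  have hv₁V : (a * ↑hcu.unit⁻¹) ∈ V := by
    apply hmemV'
    intro h0
    rw [h0, zero_mul] at hp2t
    exact hs2 hp2t.symm
  exact ⟨_, hv₁V, _, hv₂V, hxc.symm⟩
end

section
/- Let R be a local ring with residue field k and let n be a natural number. Identify the matrix ring M_n(R) with R^{n²} and endow it with the lifted topology. Then the set GL_n(R) of invertible n × n matrices over R is an open subset of M_n(R), and the inversion map GL_n(R) → GL_n(R), M ↦ M^{-1}, is continuous for the subspace topology. -/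
open Topology

/-- The lifted topology on `M_n(R)`, identifying a matrix with its tuple of entries. -/
noncomputable def matrixLiftedTopology (R : Type) [CommRing R] [IsLocalRing R] (n : ℕ) :
    TopologicalSpace (Matrix (Fin n) (Fin n) R) :=
  TopologicalSpace.induced (fun M (p : Fin n × Fin n) => M p.1 p.2)
    (liftedTopology R (Fin n × Fin n))

/-! ### Auxiliary material -/

open MvPolynomial Matrix in
/-- The generic `n × n` matrix whose entries are the variables of a polynomial ring. -/
noncomputable def genMat (k : Type) [CommRing k] (n : ℕ) :
    Matrix (Fin n) (Fin n) (MvPolynomial (Fin n × Fin n) k) :=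
  Matrix.of fun i j => MvPolynomial.X (i, j)

open MvPolynomial Matrix in
/-- A polynomial whose value at an invertible matrix `N` is `det(N)^d * g(N⁻¹)`. -/
noncomputable def invPoly {k : Type} [CommRing k] {n : ℕ}
    (g : MvPolynomial (Fin n × Fin n) k) : MvPolynomial (Fin n × Fin n) k :=
  ∑ m ∈ g.support, MvPolynomial.C (g.coeff m) *
    (genMat k n).det ^ (g.totalDegree - m.sum fun _ e => e) *
    m.prod fun p e => ((genMat k n).adjugate p.1 p.2) ^ e

open MvPolynomial Matrix in
lemma genMat_map_eval {k : Type} [CommRing k] {n : ℕ} (x : Fin n × Fin n → k) :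
    (MvPolynomial.eval x).mapMatrix (genMat k n) = Matrix.of fun i j => x (i, j) := by
  ext i j
  simp [genMat, RingHom.mapMatrix_apply]

open MvPolynomial Matrix in
lemma eval_invPoly {k : Type} [Field k] {n : ℕ} (g : MvPolynomial (Fin n × Fin n) k)
    (N : Matrix (Fin n) (Fin n) k) (hN : N.det ≠ 0) :
    MvPolynomial.eval (fun p : Fin n × Fin n => N p.1 p.2) (invPoly g) =
      N.det ^ g.totalDegree * MvPolynomial.eval (fun p : Fin n × Fin n => N⁻¹ p.1 p.2) g := by
  set x : Fin n × Fin n → k := fun p => N p.1 p.2 with hx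
  have hNx : (MvPolynomial.eval x).mapMatrix (genMat k n) = N := by
    rw [genMat_map_eval]; ext i j; rfl
  have hdet : MvPolynomial.eval x (genMat k n).det = N.det := by
    rw [RingHom.map_det, hNx]
  have hadj : ∀ p : Fin n × Fin n,
      MvPolynomial.eval x ((genMat k n).adjugate p.1 p.2) = N.adjugate p.1 p.2 := by
    intro p
    have h0 := (MvPolynomial.eval x).map_adjugate (genMat k n)
    rw [hNx] at h0
    have h1 := congrFun (congrFun (congrArg (fun M => (M : Matrix _ _ k)) h0) p.1) p.2
    simpa [RingHom.mapMatrix_apply] using h1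
  have hinv : ∀ p : Fin n × Fin n, N⁻¹ p.1 p.2 = N.det⁻¹ * N.adjugate p.1 p.2 := by
    intro p
    rw [Matrix.inv_def, Ring.inverse_eq_inv', Matrix.smul_apply, smul_eq_mul]
  rw [invPoly, map_sum, eval_eq (fun p : Fin n × Fin n => N⁻¹ p.1 p.2) g, Finset.mul_sum]
  refine Finset.sum_congr rfl fun m hm => ?_
  have hle : (m.sum fun _ e => e) ≤ g.totalDegree := le_totalDegree hm
  rw [_root_.map_mul, _root_.map_mul, eval_C, map_pow, hdet]
  have hprod : MvPolynomial.eval x (m.prod fun p e => ((genMat k n).adjugate p.1 p.2) ^ e) =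
      ∏ p ∈ m.support, (N.adjugate p.1 p.2) ^ m p := by
    rw [Finsupp.prod, map_prod]
    exact Finset.prod_congr rfl fun p _ => by rw [map_pow, hadj]
  rw [hprod]
  have h2 : ∏ p ∈ m.support, x (p.1, p.2) ^ m p
      = ∏ p ∈ m.support, (N⁻¹ p.1 p.2) ^ m p → True := fun _ => trivial
  have hNinv : ∏ p ∈ m.support, (N⁻¹ p.1 p.2) ^ m p
      = (N.det⁻¹) ^ (m.sum fun _ e => e) * ∏ p ∈ m.support, (N.adjugate p.1 p.2) ^ m p := by
    rw [Finsupp.sum, ← Finset.prod_pow_eq_pow_sum, ← Finset.prod_mul_distrib]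
    exact Finset.prod_congr rfl fun p _ => by rw [hinv, mul_pow]
  rw [hNinv]
  have hpow : N.det ^ (g.totalDegree - m.sum fun _ e => e)
      = N.det ^ g.totalDegree * (N.det ^ (m.sum fun _ e => e))⁻¹ :=
    pow_sub₀ _ hN hle
  rw [hpow, inv_pow]
  ring

open MvPolynomial Matrix IsLocalRing in
lemma map_residue_inv {R : Type} [CommRing R] [IsLocalRing R] {n : ℕ}
    (M : Matrix (Fin n) (Fin n) R) (hM : IsUnit M.det) :
    (residue R).mapMatrix M⁻¹ = ((residue R).mapMatrix M)⁻¹ := by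
  symm
  apply Matrix.inv_eq_right_inv
  rw [← _root_.map_mul ((IsLocalRing.residue R).mapMatrix), Matrix.mul_nonsing_inv M hM, _root_.map_one]

/-- For a local ring `R`, the set `GL_n(R)` of invertible matrices (those whose determinant
is a unit) is open in `M_n(R)` for the lifted topology, and matrix inversion is continuous
on it (for the subspace topology). -/
theorem GL_open_and_inversion_continuous
    (R : Type) [CommRing R] [IsLocalRing R] (n : ℕ) :
    IsOpen[matrixLiftedTopology R n] {M : Matrix (Fin n) (Fin n) R | IsUnit M.det} ∧
    @ContinuousOn _ _ (matrixLiftedTopology R n) (matrixLiftedTopology R n)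
      (fun M : Matrix (Fin n) (Fin n) R => M⁻¹)
      {M : Matrix (Fin n) (Fin n) R | IsUnit M.det} := by
  classical
  set k := IsLocalRing.ResidueField R
  set ι := (Fin n × Fin n)
  set ψ : Matrix (Fin n) (Fin n) R → (ι → k) :=
    fun M p => IsLocalRing.residue R (M p.1 p.2) with hψ
  have hTop : matrixLiftedTopology R n =
      TopologicalSpace.induced ψ (zariskiTopology k ι) := by
    rw [matrixLiftedTopology, liftedTopology, induced_compose]
    rfl
  -- the residue matrix
  have hres : ∀ M : Matrix (Fin n) (Fin n) R,
      ψ M = fun p : ι => (IsLocalRing.residue R).mapMatrix M p.1 p.2 := by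
    intro M; funext p; rfl
  -- membership characterization via determinant polynomial
  have hdetchar : ∀ M : Matrix (Fin n) (Fin n) R,
      (IsUnit M.det ↔ MvPolynomial.eval (ψ M) (genMat k n).det ≠ 0) := by
    intro M
    have h1 : MvPolynomial.eval (ψ M) (genMat k n).det
        = ((IsLocalRing.residue R).mapMatrix M).det := by
      rw [RingHom.map_det, hres]
      congr 1
      rw [genMat_map_eval]
      ext i j
      rfl
    rw [h1, ← RingHom.map_det]
    exact (IsLocalRing.residue_ne_zero_iff_isUnit _).symm
  constructor
  · -- openness of GL_n
    rw [hTop]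
    have : {M : Matrix (Fin n) (Fin n) R | IsUnit M.det}
        = ψ ⁻¹' {x : ι → k | MvPolynomial.eval x (genMat k n).det ≠ 0} := by
      ext M; exact hdetchar M
    rw [this]
    exact ⟨_, TopologicalSpace.isOpen_generateFrom_of_mem ⟨(genMat k n).det, rfl⟩, rfl⟩
  · -- continuity of inversion
    rw [hTop]
    letI : TopologicalSpace (Matrix (Fin n) (Fin n) R) :=
      TopologicalSpace.induced ψ (zariskiTopology k ι)
    set S := {M : Matrix (Fin n) (Fin n) R | IsUnit M.det}
    rw [continuousOn_iff_continuous_restrict, continuous_induced_rng, zariskiTopology,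
      continuous_generateFrom_iff]
    rintro _ ⟨g, rfl⟩
    have key : (ψ ∘ S.domRestrict (fun M : Matrix (Fin n) (Fin n) R => M⁻¹)) ⁻¹'
          {x : ι → k | MvPolynomial.eval x g ≠ 0}
        = Subtype.val ⁻¹' (ψ ⁻¹' {x : ι → k | MvPolynomial.eval x (invPoly g) ≠ 0}) := by
      ext ⟨M, hM⟩
      have hM' : IsUnit M.det := hM
      set N : Matrix (Fin n) (Fin n) k := (IsLocalRing.residue R).mapMatrix M with hN
      have hNdet : N.det ≠ 0 := by
        rw [hN, ← RingHom.map_det]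
        exact (IsLocalRing.residue_ne_zero_iff_isUnit _).mpr hM'
      have hψM : ψ M = fun p : ι => N p.1 p.2 := hres M
      have hψMinv : ψ M⁻¹ = fun p : ι => N⁻¹ p.1 p.2 := by
        rw [hres M⁻¹, map_residue_inv M hM']
      have heval := eval_invPoly g N hNdet
      simp only [Set.mem_preimage, Set.mem_setOf_eq, Function.comp_apply, Set.domRestrict_apply,
        hψM, hψMinv, heval]
      have hd : N.det ^ g.totalDegree ≠ 0 := pow_ne_zero _ hNdet
      constructor
      · intro h hz
        rcases mul_eq_zero.mp (heval.symm.trans hz) with h1 | h1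
        · exact hd h1
        · exact h h1
      · intro h hz
        exact h (heval.trans (by rw [hz, mul_zero]))
    rw [key]
    exact IsOpen.preimage continuous_subtype_val
      ⟨_, TopologicalSpace.isOpen_generateFrom_of_mem ⟨invPoly g, rfl⟩, rfl⟩
end
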